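/- Let $\theta>-1$ and for $1\le l\le n$ define $d^\theta_{nl}(t) = \sum_{k=l}^n e^{-\frac12 k(k+\theta-1)t}\,(-1)^{k-l}\,\frac{(2k+\theta-1)(l+\theta)_{(k-1)}}{l!\,(k-l)!}\,\frac{n_{[k]}}{(\theta+n)_{(k)}}$. Then for each fixed $n$, $d^\theta_{nn}(0)=1$ and $d^\theta_{nl}(0)=0$ for $1\le l<n$; i.e. $\sum_{k=l}^n (-1)^{k-l}\frac{(2k+\theta-1)(l+\theta)_{(k-1)}}{l!(k-l)!}\frac{n_{[k]}}{(\theta+n)_{(k)}} = \delta_{ln}$. -/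
import Mathlib


open Finset

/-- Kingman-graph edge weight `χ(ω,η)`: for a covering pair, the increased part size is
the unique element of `η - ω`, and the weight is the number of parts of `η` of that size. -/
def chiW (ω η : Multiset ℕ) : ℕ := η.count ((η - ω).sum)

/-- The partitions covering `ω` (increase one part by `1`, or add a new part `1`). -/
def upSet (ω : Multiset ℕ) : Finset (Multiset ℕ) :=
  insert (1 ::ₘ ω) (ω.toFinset.image (fun k => (k + 1) ::ₘ ω.erase k))

/-- The partitions covered by `η` (decrease one part by `1`, deleting it if it was `1`). -/
def downSet (η : Multiset ℕ) : Finset (Multiset ℕ) :=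
  η.toFinset.image (fun k => if k = 1 then η.erase 1 else (k - 1) ::ₘ η.erase k)

/-- Total path weight from `ω` up to `η` in the Kingman graph, with fuel. -/
def kdimAux : ℕ → Multiset ℕ → Multiset ℕ → ℕ
  | 0, ω, η => if ω = η then 1 else 0
  | m + 1, ω, η => ∑ lam ∈ downSet η, chiW lam η * kdimAux m ω lam

/-- `dim(ω, η)`: total path weight from `ω` to `η`. -/
def kdim (ω η : Multiset ℕ) : ℕ := kdimAux (η.sum - ω.sum) ω η

/-- Multinomial coefficient `(|η| choose η)` as a rational. -/
def multQ (η : Multiset ℕ) : ℚ := (Nat.factorial η.sum : ℚ) / ((η.map Nat.factorial).prod : ℕ)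

/-- Multinomial coefficient as a real. -/
noncomputable def multR (η : Multiset ℕ) : ℝ := (Nat.factorial η.sum : ℝ) / ((η.map Nat.factorial).prod : ℕ)

/-- Young-diagram containment `ω ⊂ η` (componentwise on ranked parts, via conjugates). -/
def ydLE (ω η : Multiset ℕ) : Prop :=
  ∀ k, Multiset.card (ω.filter (fun a => k ≤ a)) ≤ Multiset.card (η.filter (fun a => k ≤ a))

/-- Rising factorial `a (a+1) ⋯ (a+k-1)`. -/
noncomputable def riseF (a : ℝ) (k : ℕ) : ℝ := ∏ i ∈ Finset.range k, (a + i)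

/-- Ewens–Pitman moment `m(η) = 𝔼_{α,θ}[ ̃P_η]` (the `θ`-factor cancelled form of
`∏_{l=0}^{d-1}(θ+lα)/(θ)_{(n)} ∏ (1-α)_{(η_i-1)}`). -/
noncomputable def EPM (α θ : ℝ) (η : Multiset ℕ) : ℝ :=
  (∏ l ∈ Finset.Ico 1 (Multiset.card η), (θ + l * α)) /
      (∏ i ∈ Finset.Ico 1 η.sum, (θ + i)) *
    (η.map (fun p => riseF (1 - α) (p - 1))).prod

/-- `a₁(η)! ⋯ a_n(η)!`. -/
def aprod (η : Multiset ℕ) : ℕ := ∏ k ∈ Finset.Icc 1 η.sum, Nat.factorial (η.count k)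

/-- Chinese-restaurant edge weight `χ_B(ω,η)`. -/
def chiB (ω η : Multiset ℕ) : ℕ :=
  if (η - ω).sum = 1 then 1 else ω.count ((η - ω).sum - 1)

/-- Augmented monomial symmetric function as a real-valued function. -/
noncomputable def tildePR (N : ℕ) (η : List ℕ) (x : Fin N → ℝ) : ℝ :=
  ∑ f ∈ (Finset.univ : Finset (Fin η.length → Fin N)).filter Function.Injective,
    ∏ j, x (f j) ^ η.get j

/-- Monomial symmetric function: sum over distinct rearrangements of `η`. -/
noncomputable def monoP (N : ℕ) (η : Multiset ℕ) (x : Fin N → ℝ) : ℝ :=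
  ∑ v ∈ (Finset.univ : Finset (Fin N → Fin (η.sum + 1))).filter
      (fun v => Multiset.filter (fun a => 0 < a)
        (Multiset.map (fun i => ((v i : ℕ))) (Finset.univ : Finset (Fin N)).val) = η),
    ∏ i, x i ^ ((v i : ℕ))

/-- `\vec P_η(x) = (n choose η) P_η(x)`. -/
noncomputable def vecP (N : ℕ) (η : Multiset ℕ) (x : Fin N → ℝ) : ℝ :=
  (Nat.factorial η.sum : ℝ) / ((η.map Nat.factorial).prod : ℕ) * monoP N η x

/-- Augmented monomial symmetric polynomial. -/
noncomputable def tildePoly (N : ℕ) (η : List ℕ) : MvPolynomial (Fin N) ℝ :=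
  ∑ f ∈ (Finset.univ : Finset (Fin η.length → Fin N)).filter Function.Injective,
    ∏ j, (MvPolynomial.X (f j)) ^ η.get j

/-- The operator `𝓛_{α,θ}` on polynomials. -/
noncomputable def Lop (α θ : ℝ) {N : ℕ} (p : MvPolynomial (Fin N) ℝ) :
    MvPolynomial (Fin N) ℝ :=
  MvPolynomial.C (1 / 2 : ℝ) *
      (∑ i, ∑ j, MvPolynomial.X i * ((if i = j then 1 else 0) - MvPolynomial.X j) *
        MvPolynomial.pderiv i (MvPolynomial.pderiv j p)) -
    MvPolynomial.C (1 / 2 : ℝ) *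
      (∑ i, (MvPolynomial.C θ * MvPolynomial.X i + MvPolynomial.C α) * MvPolynomial.pderiv i p)

/-- The ideal generated by `∑ xᵢ - 1` (identities on the simplex). -/
noncomputable def simplexIdeal (N : ℕ) : Ideal (MvPolynomial (Fin N) ℝ) :=
  Ideal.span {(∑ i, MvPolynomial.X i) - 1}


lemma riseF_succ' (a : ℝ) (k : ℕ) : riseF a (k + 1) = riseF a k * (a + k) :=
  Finset.prod_range_succ _ _

lemma riseF_pos' {a : ℝ} (ha : 0 < a) (k : ℕ) : 0 < riseF a k :=
  Finset.prod_pos fun i _ => by positivity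

lemma lod_partial_sum (θ : ℝ) (hθ : -1 < θ) (l n : ℕ) (hl : 1 ≤ l) (hln : l < n)
    (m : ℕ) (hlm : l ≤ m) (hmn : m ≤ n) :
    (∑ k ∈ Finset.Icc l m,
        (-1 : ℝ) ^ (k - l) * (2 * (k : ℝ) + θ - 1) * riseF ((l : ℝ) + θ) (k - 1) /
            ((Nat.factorial l : ℝ) * (Nat.factorial (k - l) : ℝ)) *
          (n.descFactorial k : ℝ) / riseF (θ + (n : ℝ)) k) =
      (-1 : ℝ) ^ (m - l) * riseF ((l : ℝ) + θ) m * (n.descFactorial m : ℝ) *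
          ((n : ℝ) - m) /
        ((Nat.factorial l : ℝ) * (Nat.factorial (m - l) : ℝ) * riseF (θ + (n : ℝ)) m *
          ((n : ℝ) - l)) := by
  have hθn : (0:ℝ) < θ + n := by
    have : (1:ℝ) ≤ n := by exact_mod_cast Nat.one_le_iff_ne_zero.mpr (by omega)
    linarith
  have hnl : ((n : ℝ) - l) ≠ 0 := by
    have : (l:ℝ) < n := by exact_mod_cast hln
    linarith
  induction m, hlm using Nat.le_induction with
  | base =>
    obtain ⟨j, rfl⟩ : ∃ j, l = j + 1 := ⟨l - 1, by omega⟩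
    rw [Finset.Icc_self, Finset.sum_singleton]
    simp only [Nat.sub_self, Nat.add_sub_cancel, pow_zero, Nat.factorial_zero, Nat.cast_one,
      one_mul, mul_one]
    rw [riseF_succ', riseF_succ']
    have hRn : riseF (θ + (n : ℝ)) j ≠ 0 := ne_of_gt (riseF_pos' hθn _)
    have hθnj : θ + (n:ℝ) + j ≠ 0 := by positivity
    have hfl : ((j+1).factorial : ℝ) ≠ 0 := by positivity
    simp only [div_mul_eq_mul_div, div_div]
    push_cast
    have hnl' : ((n:ℝ) - ((j:ℝ) + 1)) ≠ 0 := by push_cast at hnl; exact hnl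
    rw [div_eq_div_iff (by apply_rules [mul_ne_zero]) (by apply_rules [mul_ne_zero])]
    ring
  | succ m hlm ih =>
    have hmn' : m ≤ n := by omega
    rw [Finset.sum_Icc_succ_top (by omega : l ≤ m + 1), ih hmn']
    have h1 : m + 1 - l = (m - l) + 1 := by omega
    have h2 : m + 1 - 1 = m := by omega
    rw [h1, h2, pow_succ, Nat.descFactorial_succ, Nat.factorial_succ]
    rw [riseF_succ', riseF_succ']
    have hRn : riseF (θ + (n : ℝ)) m ≠ 0 := ne_of_gt (riseF_pos' hθn m)
    have hθnm : θ + (n:ℝ) + m ≠ 0 := by positivity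
    have hfl : (l.factorial : ℝ) ≠ 0 := by positivity
    have hfml : ((m-l).factorial : ℝ) ≠ 0 := by positivity
    have hdf : ((n - m : ℕ) : ℝ) = (n:ℝ) - m := by rw [Nat.cast_sub hmn']
    have hml : ((m - l : ℕ) : ℝ) = (m:ℝ) - l := by rw [Nat.cast_sub hlm]
    have hmll : ((m:ℝ) - l + 1) ≠ 0 := by
      have : (l:ℝ) ≤ m := by exact_mod_cast hlm
      linarith
    simp only [div_mul_eq_mul_div, div_div]
    push_cast [hdf, hml]
    rw [div_add_div _ _ (by apply_rules [mul_ne_zero]) (by apply_rules [mul_ne_zero]),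
      div_eq_div_iff (by apply_rules [mul_ne_zero]) (by apply_rules [mul_ne_zero])]
    ring

/-- The coefficients of the lines-of-descent transition probabilities reduce to the
identity at `t = 0`:
`∑_{k=l}^n (-1)^{k-l} (2k+θ-1)(l+θ)_{(k-1)} / (l!(k-l)!) ⋅ n_{[k]}/(θ+n)_{(k)} = δ_{ln}`. -/
theorem lines_of_descent_identity (θ : ℝ) (hθ : -1 < θ) (l n : ℕ)
    (hl : 1 ≤ l) (hln : l ≤ n) :
    (∑ k ∈ Finset.Icc l n,
        (-1 : ℝ) ^ (k - l) * (2 * (k : ℝ) + θ - 1) * riseF ((l : ℝ) + θ) (k - 1) /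
            ((Nat.factorial l : ℝ) * (Nat.factorial (k - l) : ℝ)) *
          (n.descFactorial k : ℝ) / riseF (θ + (n : ℝ)) k) =
      if l = n then 1 else 0 := by
  rcases eq_or_lt_of_le hln with rfl | hln'
  · simp only [if_pos rfl]
    obtain ⟨j, rfl⟩ : ∃ j, l = j + 1 := ⟨l - 1, by omega⟩
    rw [Finset.Icc_self, Finset.sum_singleton]
    simp only [Nat.sub_self, Nat.add_sub_cancel, pow_zero, Nat.factorial_zero, Nat.cast_one,
      one_mul, mul_one, Nat.descFactorial_self]
    rw [riseF_succ']
    have hθn : (0:ℝ) < θ + (j+1:ℕ) := by push_cast; linarith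
    have hRn : riseF (θ + ((j+1:ℕ) : ℝ)) j ≠ 0 := ne_of_gt (riseF_pos' hθn _)
    have hθnj : θ + ((j+1:ℕ):ℝ) + j ≠ 0 := by positivity
    have hfl : ((j+1).factorial : ℝ) ≠ 0 := by positivity
    have hre : riseF (((j+1:ℕ):ℝ) + θ) j = riseF (θ + ((j+1:ℕ):ℝ)) j := by
      unfold riseF; exact Finset.prod_congr rfl fun i _ => by ring
    rw [hre]
    simp only [div_mul_eq_mul_div, div_div]
    simp only [if_true]
    rw [div_eq_one_iff_eq (by apply_rules [mul_ne_zero])]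
    push_cast
    ring
  · rw [if_neg (by omega), lod_partial_sum θ hθ l n hl hln' n hln le_rfl]
    rw [sub_self, mul_zero, zero_div]
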